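/- Let a, b be natural numbers with a ≥ 2 and b ≥ 2, and let A = [[1, a, 0], [0, 1, a], [0, 0, 1]] and B = [[1, 0, 0], [b, 1, 0], [0, b, 1]] in SL₃(ℤ). Then for every integer l ≥ 4, the matrices A^l and B^l generate a free subgroup of rank 2 of SL₃(ℤ); that is, the group homomorphism from the free group on two generators to SL₃(ℤ) sending the two generators to A^l and B^l respectively is injective. -/

import Mathlib

/-- `A = [[1, a, 0], [0, 1, a], [0, 0, 1]]` as an element of `SL₃(ℤ)`. -/
def A3 (a : ℕ) : Matrix.SpecialLinearGroup (Fin 3) ℤ :=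
  ⟨!![1, (a : ℤ), 0; 0, 1, (a : ℤ); 0, 0, 1], by
    simp [Matrix.det_fin_three, Matrix.vecHead, Matrix.vecTail]⟩

/-- `B = [[1, 0, 0], [b, 1, 0], [0, b, 1]]` as an element of `SL₃(ℤ)`. -/
def B3 (b : ℕ) : Matrix.SpecialLinearGroup (Fin 3) ℤ :=
  ⟨!![1, 0, 0; (b : ℤ), 1, 0; 0, (b : ℤ), 1], by
    simp [Matrix.det_fin_three, Matrix.vecHead, Matrix.vecTail]⟩

/-!
Ping-pong on `ℤ³`. Let `X` be the vectors whose first coordinate dominates, `|v₁| + |v₂| < |v₀|`,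
and `Y` those whose last coordinate dominates, `|v₀| + |v₁| < |v₂|`. The matrices
`[[1, s, t], [0, 1, s], [0, 0, 1]]` multiply by `(s, t) * (s', t') = (s + s', t + t' + s s')`, so
`A^m` has `s = m a` and `2 t = m (m - 1) a²`. For `m = l n` with `n ≠ 0` we have `|m| ≥ 4`, hence
`|t| ≥ 2 |s| + 2`, and then the corner entry `t` alone makes `A^m` map `Y` into `X`. The powers of `B`
are the lower triangular mirror image and map `X` into `Y`, and the ping-pong lemma concludes.
-/

open Function Pointwise
open scoped MatrixGroups

theorem FreeGroup.injective_lift_of_zpow_ping_pong {ι G α : Type*} [Nontrivial ι] [Group G]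
    [MulAction G α] (a : ι → G) (X : ι → Set α) (hX : ∀ i, (X i).Nonempty)
    (hXdisj : Pairwise (Disjoint on X))
    (hpp : Pairwise fun i j => ∀ n : ℤ, n ≠ 0 → a i ^ n • X j ⊆ X i) :
    Injective (FreeGroup.lift a) := by
  have hlift : FreeGroup.lift a = (Monoid.CoprodI.lift fun i => FreeGroup.lift fun _ => a i).comp
      (freeGroupEquivCoprodI (ι := ι)).toMonoidHom := by
    ext i
    simp
  rw [hlift, MonoidHom.coe_comp]
  refine .comp ?_ freeGroupEquivCoprodI.injective
  refine Monoid.CoprodI.lift_injective_of_ping_pong _ ?_ X hX hXdisj ?_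
  · inhabit ι
    refine .inr ⟨default, ?_⟩
    rw [FreeGroup.freeGroupUnitEquivInt.cardinal_eq, Cardinal.mk_int]
    exact Cardinal.natCast_lt_aleph0.le
  · intro i j hij h hh
    obtain ⟨n, rfl⟩ := FreeGroup.freeGroupUnitEquivInt.symm.surjective h
    have hn : n ≠ 0 := by rintro rfl; exact hh rfl
    simpa [FreeGroup.freeGroupUnitEquivInt] using hpp hij n hn

theorem FreeGroup.injective_lift_fin_two_of_ping_pong {G α : Type*} [Group G] [MulAction G α]
    {x y : G} {X Y : Set α} (hX : X.Nonempty) (hXY : Disjoint X Y)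
    (hx : ∀ n : ℤ, n ≠ 0 → x ^ n • Y ⊆ X) (hy : ∀ n : ℤ, n ≠ 0 → y ^ n • X ⊆ Y) :
    Injective (FreeGroup.lift ![x, y]) := by
  refine FreeGroup.injective_lift_of_zpow_ping_pong _ ![X, Y] ?_ ?_ ?_
  · have hY : Y.Nonempty := (hX.smul_set (a := y ^ (1 : ℤ))).mono (hy 1 one_ne_zero)
    simp [Fin.forall_fin_two, hX, hY]
  · intro i j hij
    fin_cases i <;> fin_cases j <;> simp_all [onFun, hXY.symm]
  · intro i j hij
    fin_cases i <;> fin_cases j <;> simp_all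

section Unipotent

variable {R : Type*} [CommRing R]

def upperUnipotent (s t : R) : SL(3, R) :=
  ⟨!![1, s, t; 0, 1, s; 0, 0, 1], by simp [Matrix.det_fin_three]⟩

def lowerUnipotent (s t : R) : SL(3, R) :=
  ⟨!![1, 0, 0; s, 1, 0; t, s, 1], by simp [Matrix.det_fin_three]⟩

theorem upperUnipotent_mul (s t s' t' : R) :
    upperUnipotent s t * upperUnipotent s' t' = upperUnipotent (s + s') (t + t' + s * s') := by
  apply Subtype.ext
  rw [Matrix.SpecialLinearGroup.coe_mul]
  simp only [upperUnipotent, Matrix.mul_fin_three, mul_one, mul_zero, one_mul, zero_mul,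
    add_zero, zero_add]
  ring_nf

theorem lowerUnipotent_mul (s t s' t' : R) :
    lowerUnipotent s t * lowerUnipotent s' t' = lowerUnipotent (s + s') (t + t' + s * s') := by
  apply Subtype.ext
  rw [Matrix.SpecialLinearGroup.coe_mul]
  simp only [lowerUnipotent, Matrix.mul_fin_three, mul_one, mul_zero, one_mul, zero_mul,
    add_zero, zero_add]
  ring_nf

theorem upperUnipotent_smul (s t : R) (v : Fin 3 → R) :
    upperUnipotent s t • v = ![v 0 + s * v 1 + t * v 2, v 1 + s * v 2, v 2] := by
  rw [Matrix.SpecialLinearGroup.smul_def]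
  ext i
  fin_cases i <;> simp [upperUnipotent, Matrix.mulVec, dotProduct, Fin.sum_univ_three]

theorem lowerUnipotent_smul (s t : R) (v : Fin 3 → R) :
    lowerUnipotent s t • v = ![v 0, s * v 0 + v 1, t * v 0 + s * v 1 + v 2] := by
  rw [Matrix.SpecialLinearGroup.smul_def]
  ext i
  fin_cases i <;> simp [lowerUnipotent, Matrix.mulVec, dotProduct, Fin.sum_univ_three]

end Unipotent

theorem two_mul_abs_add_two_le_abs {a m t : ℤ} (ha : 2 ≤ |a|) (hm : 4 ≤ |m|)
    (ht : 2 * t = m * (m - 1) * a ^ 2) : 2 * |m * a| + 2 ≤ |t| := by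
  have hm1 : 3 ≤ |m - 1| := by
    have := abs_sub_abs_le_abs_sub m 1
    rw [abs_one] at this
    linarith
  have habs : 2 * |t| = |m| * |m - 1| * |a| ^ 2 := by
    rw [← abs_two, ← abs_mul, ht, abs_mul, abs_mul, abs_pow]
  rw [abs_mul]
  nlinarith [mul_le_mul_of_nonneg_left hm1 (by positivity : 0 ≤ |m| * |a| ^ 2),
    mul_le_mul_of_nonneg_left ha (by positivity : 0 ≤ |m| * |a|)]

section Powers

variable {G : Type*} [Group G] {f : ℤ → ℤ → G}
  (hf : ∀ s t s' t', f s t * f s' t' = f (s + s') (t + t' + s * s'))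
include hf

theorem exists_zpow_eq_of_mul_eq (a n : ℤ) :
    ∃ t, f a 0 ^ n = f (n * a) t ∧ 2 * t = n * (n - 1) * a ^ 2 := by
  have hone : f 0 0 = 1 := by simpa using hf 0 0 0 0
  have hinv : (f a 0)⁻¹ = f (-a) (a ^ 2) := by
    refine inv_eq_of_mul_eq_one_right ?_
    rw [hf, ← hone]
    congr 1 <;> ring
  induction n using Int.induction_on with
  | zero => exact ⟨0, by simp [hone], by ring⟩
  | succ k ih =>
    obtain ⟨t, ht, h2⟩ := ih
    refine ⟨t + k * a ^ 2, ?_, by linear_combination h2⟩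
    rw [zpow_add_one, ht, hf]
    congr 1 <;> ring
  | pred k ih =>
    obtain ⟨t, ht, h2⟩ := ih
    refine ⟨t + a ^ 2 + k * a ^ 2, ?_, by linear_combination h2⟩
    rw [zpow_sub_one, ht, hinv, hf]
    congr 1 <;> ring

theorem exists_pow_zpow_eq_of_mul_eq {a : ℤ} {l : ℕ} {n : ℤ} (ha : 2 ≤ |a|) (hl : 4 ≤ l)
    (hn : n ≠ 0) : ∃ s t, (f a 0 ^ l) ^ n = f s t ∧ 2 * |s| + 2 ≤ |t| := by
  have hln : 4 ≤ |(l : ℤ) * n| := by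
    rw [abs_mul, Nat.abs_cast]
    nlinarith [Int.one_le_abs hn, (Nat.ofNat_le_cast (α := ℤ)).2 hl]
  obtain ⟨t, hpow, ht⟩ := exists_zpow_eq_of_mul_eq hf a (l * n)
  refine ⟨l * n * a, t, ?_, two_mul_abs_add_two_le_abs ha hln ht⟩
  rw [← zpow_natCast, ← zpow_mul, hpow]

end Powers

section Dominance

variable (R : Type*) [CommRing R] [LinearOrder R] [IsStrictOrderedRing R]

def firstCoordDominant : Set (Fin 3 → R) := {v | |v 1| + |v 2| < |v 0|}

def lastCoordDominant : Set (Fin 3 → R) := {v | |v 0| + |v 1| < |v 2|}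

variable {R}

theorem disjoint_firstCoordDominant_lastCoordDominant :
    Disjoint (firstCoordDominant R) (lastCoordDominant R) :=
  Set.disjoint_left.2 fun v h0 h2 => by
    simp only [firstCoordDominant, lastCoordDominant, Set.mem_ofPred_eq] at h0 h2
    linarith [abs_nonneg (v 0), abs_nonneg (v 1), abs_nonneg (v 2)]

theorem abs_add_abs_lt_abs_add_add {s t x y z : R} (hst : 2 * |s| + 2 ≤ |t|)
    (hxyz : |x| + |y| < |z|) : |y + s * z| + |z| < |x + s * y + t * z| := by
  have hsz : |y + s * z| ≤ |y| + |s| * |z| := (abs_add_le _ _).trans_eq (by rw [abs_mul])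
  have hxy : |x + s * y| ≤ |x| + |s| * |y| := (abs_add_le _ _).trans_eq (by rw [abs_mul])
  have htz : |t| * |z| - |x + s * y| ≤ |x + s * y + t * z| := by
    rw [← abs_mul, add_comm (x + s * y)]
    exact abs_sub_abs_le_abs_add (t * z) (x + s * y)
  nlinarith [abs_nonneg x, abs_nonneg s, mul_le_mul_of_nonneg_right hst (abs_nonneg z),
    mul_lt_mul_of_pos_left hxyz (by positivity : 0 < |s| + 1)]

theorem upperUnipotent_smul_lastCoordDominant_subset {s t : R} (hst : 2 * |s| + 2 ≤ |t|) :
    upperUnipotent s t • lastCoordDominant R ⊆ firstCoordDominant R := by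
  rintro _ ⟨v, hv, rfl⟩
  simp only [firstCoordDominant, Set.mem_ofPred_eq, upperUnipotent_smul, Matrix.cons_val_zero,
    Matrix.cons_val_one, Matrix.cons_val_two, Matrix.head_cons, Matrix.tail_cons]
  exact abs_add_abs_lt_abs_add_add hst hv

theorem lowerUnipotent_smul_firstCoordDominant_subset {s t : R} (hst : 2 * |s| + 2 ≤ |t|) :
    lowerUnipotent s t • firstCoordDominant R ⊆ lastCoordDominant R := by
  rintro _ ⟨v, hv, rfl⟩
  have hv' : |v 2| + |v 1| < |v 0| := (add_comm _ _).trans_lt hv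
  simp only [lastCoordDominant, Set.mem_ofPred_eq, lowerUnipotent_smul, Matrix.cons_val_zero,
    Matrix.cons_val_one, Matrix.cons_val_two, Matrix.head_cons, Matrix.tail_cons]
  rw [add_comm (s * v 0), show t * v 0 + s * v 1 + v 2 = v 2 + s * v 1 + t * v 0 by ring,
    add_comm |v 0|]
  exact abs_add_abs_lt_abs_add_add hst hv'

end Dominance

/-- for natural numbers `a, b ≥ 2` and every `l ≥ 4`, the matrices `A^l` and
`B^l` generate a free subgroup of rank 2 of `SL₃(ℤ)`. -/
theorem sl3_free_powers (a b : ℕ) (ha : 2 ≤ a) (hb : 2 ≤ b) (l : ℕ) (hl : 4 ≤ l) :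
    Function.Injective ⇑(FreeGroup.lift ![(A3 a) ^ l, (B3 b) ^ l]) := by
  refine FreeGroup.injective_lift_fin_two_of_ping_pong (X := firstCoordDominant ℤ)
    ⟨Pi.single 0 1, by simp [firstCoordDominant]⟩ disjoint_firstCoordDominant_lastCoordDominant
    (fun n hn => ?_) (fun n hn => ?_)
  · obtain ⟨s, t, hpow, hst⟩ :=
      exists_pow_zpow_eq_of_mul_eq upperUnipotent_mul (a := a) (by simpa using ha) hl hn
    rw [show A3 a = upperUnipotent (a : ℤ) 0 from rfl, hpow]
    exact upperUnipotent_smul_lastCoordDominant_subset hst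
  · obtain ⟨s, t, hpow, hst⟩ :=
      exists_pow_zpow_eq_of_mul_eq lowerUnipotent_mul (a := b) (by simpa using hb) hl hn
    rw [show B3 b = lowerUnipotent (b : ℤ) 0 from rfl, hpow]
    exact lowerUnipotent_smul_firstCoordDominant_subset hst
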